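/- Discrete potential energy evolution identity: Suppose the midpoint-discretized Ampère equations hold. Then 𝓔_p^{j+1} − 𝓔_p^{j} = −Δt·L·Σ_{s∈S} q^s·α^s·Σ_{k=−N_x}^{N_x} (u^s·Ĉ^{s,j+1/2}_{0,k} + (α^s/√2)·Ĉ^{s,j+1/2}_{1,k})·Ê^{j+1/2}_{−k}. -/

import Mathlib

open Finset

/-- Implicit midpoint value `X^{j+1/2} = (X^j + X^{j+1})/2`. -/
noncomputable def midpt (a b : ℂ) : ℂ := (a + b) / 2

/-- Discrete potential energy at a time level with electric-field coefficients `E`. -/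
noncomputable def potentialEnergy (Nx : ℕ) (ε₀ L : ℝ) (E : ℤ → ℂ) : ℂ :=
  ((ε₀ : ℂ) * (L : ℂ) / 2) * ∑ k ∈ Finset.Icc (-(Nx : ℤ)) (Nx : ℤ), E k * E (-k)

/-!
The energy `Σₖ Eₖ E₋ₖ` is the diagonal of the symmetric bilinear form `B(a, b) = Σₖ aₖ b₋ₖ`
(symmetric because the mode range is invariant under `k ↦ -k`), so the energy increment is
`B(Eʲ⁺¹ - Eʲ, Eʲ + Eʲ⁺¹)`. The midpoint Ampère law replaces `ε₀ (Eʲ⁺¹ - Eʲ)` by `-Δt` times the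
total current, and exchanging the sums over modes and species gives the claim.
-/

section NegInvariant

variable {ι : Type*} [InvolutiveNeg ι] {s : Finset ι}

theorem Finset.sum_comp_neg_of_neg_mem {M : Type*} [AddCommMonoid M]
    (hs : ∀ k ∈ s, -k ∈ s) (f : ι → M) :
    ∑ k ∈ s, f (-k) = ∑ k ∈ s, f k :=
  sum_nbij' Neg.neg Neg.neg hs hs (fun k _ => neg_neg k) (fun k _ => neg_neg k) fun _ _ => rfl

theorem Finset.sum_mul_comp_neg_sub_sum_mul_comp_neg {R : Type*} [CommRing R]
    (hs : ∀ k ∈ s, -k ∈ s) (a b : ι → R) :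
    ∑ k ∈ s, b k * b (-k) - ∑ k ∈ s, a k * a (-k)
      = ∑ k ∈ s, (b k - a k) * (a (-k) + b (-k)) := by
  have hcross : ∑ k ∈ s, (b k * a (-k) - a k * b (-k)) = 0 := by
    rw [sum_sub_distrib, sub_eq_zero, ← sum_comp_neg_of_neg_mem hs]
    simp only [neg_neg, mul_comm]
  calc ∑ k ∈ s, b k * b (-k) - ∑ k ∈ s, a k * a (-k)
      = ∑ k ∈ s, ((b k - a k) * (a (-k) + b (-k)) - (b k * a (-k) - a k * b (-k))) := by
        rw [← sum_sub_distrib]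
        exact sum_congr rfl fun k _ => by ring
    _ = ∑ k ∈ s, (b k - a k) * (a (-k) + b (-k)) := by rw [sum_sub_distrib, hcross, sub_zero]

end NegInvariant

theorem neg_mem_Icc_neg_self {N k : ℤ} (hk : k ∈ Icc (-N) N) : -k ∈ Icc (-N) N := by
  rw [mem_Icc] at hk ⊢
  omega

theorem potentialEnergy_sub (Nx : ℕ) (ε₀ L : ℝ) (E₀ E₁ : ℤ → ℂ) :
    potentialEnergy Nx ε₀ L E₁ - potentialEnergy Nx ε₀ L E₀
      = (ε₀ : ℂ) * L * ∑ k ∈ Icc (-(Nx : ℤ)) Nx, (E₁ k - E₀ k) * midpt (E₀ (-k)) (E₁ (-k)) := by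
  rw [potentialEnergy, potentialEnergy, ← mul_sub,
    sum_mul_comp_neg_sub_sum_mul_comp_neg (fun _ => neg_mem_Icc_neg_self), mul_sum, mul_sum]
  exact sum_congr rfl fun k _ => by rw [midpt]; ring

theorem potentialEnergy_sub_of_ampere {Nx : ℕ} {ε₀ L Δt : ℝ} (hΔt : Δt ≠ 0)
    {E₀ E₁ J : ℤ → ℂ}
    (hAmpere : ∀ k ∈ Icc (-(Nx : ℤ)) Nx, (ε₀ : ℂ) * (E₁ k - E₀ k) / Δt + J k = 0) :
    potentialEnergy Nx ε₀ L E₁ - potentialEnergy Nx ε₀ L E₀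
      = -((Δt : ℂ) * L) * ∑ k ∈ Icc (-(Nx : ℤ)) Nx, J k * midpt (E₀ (-k)) (E₁ (-k)) := by
  have hΔ : (Δt : ℂ) ≠ 0 := by exact_mod_cast hΔt
  have hflux : ∀ k ∈ Icc (-(Nx : ℤ)) Nx, (ε₀ : ℂ) * (E₁ k - E₀ k) = -Δt * J k := by
    intro k hk
    have h := hAmpere k hk
    field_simp at h
    linear_combination h
  rw [potentialEnergy_sub, mul_sum, mul_sum]
  refine sum_congr rfl fun k hk => ?_
  linear_combination (L : ℂ) * midpt (E₀ (-k)) (E₁ (-k)) * hflux k hk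

theorem discrete_potential_energy_evolution_general {σ : Type*} (S : Finset σ)
    (Nx : ℕ) (L Δt ε₀ : ℝ) (hΔt : 0 < Δt)
    (qs αs us : σ → ℝ)
    (Cj Cj1 : σ → ℤ → ℤ → ℂ) (Ej Ej1 : ℤ → ℂ)
    (hAmpere : ∀ k : ℤ, -(Nx : ℤ) ≤ k → k ≤ (Nx : ℤ) →
      (ε₀ : ℂ) * (Ej1 k - Ej k) / (Δt : ℂ)
        + ∑ s ∈ S, (qs s : ℂ) * (αs s : ℂ) *
            ((us s : ℂ) * midpt (Cj s 0 k) (Cj1 s 0 k)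
              + ((αs s : ℂ) / (Real.sqrt 2 : ℂ)) * midpt (Cj s 1 k) (Cj1 s 1 k)) = 0) :
    potentialEnergy Nx ε₀ L Ej1 - potentialEnergy Nx ε₀ L Ej
      = -((Δt : ℂ) * (L : ℂ)) * ∑ s ∈ S, (qs s : ℂ) * (αs s : ℂ) *
          ∑ k ∈ Finset.Icc (-(Nx : ℤ)) (Nx : ℤ),
            ((us s : ℂ) * midpt (Cj s 0 k) (Cj1 s 0 k)
              + ((αs s : ℂ) / (Real.sqrt 2 : ℂ)) * midpt (Cj s 1 k) (Cj1 s 1 k)) *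
              midpt (Ej (-k)) (Ej1 (-k)) := by
  rw [potentialEnergy_sub_of_ampere hΔt.ne' fun k hk =>
    hAmpere k (mem_Icc.1 hk).1 (mem_Icc.1 hk).2]
  simp only [sum_mul, mul_sum, mul_assoc]
  rw [sum_comm]

/-- Discrete potential energy evolution identity. -/
theorem discrete_potential_energy_evolution {σ : Type*} (S : Finset σ)
    (Nv Nx : ℕ) (L Δt ε₀ : ℝ) (hL : 0 < L) (hΔt : 0 < Δt) (hε₀ : 0 < ε₀)
    (ms qs αs us : σ → ℝ) (hms : ∀ s ∈ S, 0 < ms s) (hαs : ∀ s ∈ S, 0 < αs s)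
    (Cj Cj1 : σ → ℤ → ℤ → ℂ) (Ej Ej1 : ℤ → ℂ)
    (hAmpere : ∀ k : ℤ, -(Nx : ℤ) ≤ k → k ≤ (Nx : ℤ) →
      (ε₀ : ℂ) * (Ej1 k - Ej k) / (Δt : ℂ)
        + ∑ s ∈ S, (qs s : ℂ) * (αs s : ℂ) *
            ((us s : ℂ) * midpt (Cj s 0 k) (Cj1 s 0 k)
              + ((αs s : ℂ) / (Real.sqrt 2 : ℂ)) * midpt (Cj s 1 k) (Cj1 s 1 k)) = 0) :
    potentialEnergy Nx ε₀ L Ej1 - potentialEnergy Nx ε₀ L Ej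
      = -((Δt : ℂ) * (L : ℂ)) * ∑ s ∈ S, (qs s : ℂ) * (αs s : ℂ) *
          ∑ k ∈ Finset.Icc (-(Nx : ℤ)) (Nx : ℤ),
            ((us s : ℂ) * midpt (Cj s 0 k) (Cj1 s 0 k)
              + ((αs s : ℂ) / (Real.sqrt 2 : ℂ)) * midpt (Cj s 1 k) (Cj1 s 1 k)) *
              midpt (Ej (-k)) (Ej1 (-k)) :=
  discrete_potential_energy_evolution_general S Nx L Δt ε₀ hΔt qs αs us Cj Cj1 Ej Ej1 hAmpere
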